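/- (Fisher consistency, integrated form of Lemma 1.) Let K ≥ 1 be an integer, (X, Σ_X, μ) a measure space, and W : X × {−1,1}^K → ℝ such that x ↦ W(x,a) is measurable and integrable for each a ∈ {−1,1}^K. Then for every measurable f : X → ℝ^K such that x ↦ Σ_a W(x,a) ψ(a ⊙ f(x)) is integrable, ∫ Σ_{a ∈ {−1,1}^K} W(x,a) ψ(a ⊙ f(x)) dμ(x) ≥ ∫ (Σ_{a} W(x,a) − max(0, max_{a} W(x,a))) dμ(x). Moreover, if for μ-a.e. x the function a ↦ W(x,a) attains its maximum at a unique point a₀(x) and W(x, a₀(x)) > 0, then equality holds if and only if for μ-a.e. x, a₀(x)_k f(x)_k ≥ 1 for all k = 1, …, K; in particular any minimizer f of the ψ-risk satisfies sign(f(x)) = a₀(x) μ-a.e. -/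

import Mathlib

/-! Since `T₀ z = max 0 (T₁ z - 1)`, we have `ψ z = min (T₁ z) 1`. So the margin
`1 - ψ (a ⊙ z)` lies in `[0, 1]` and is positive only if `a ⊙ z > 0` coordinatewise, which
holds for at most one sign vector `a`. Pointwise, `∑ₐ W x a * (1 - ψ (a ⊙ f x))` is therefore
at most `max 0 (maxₐ W x a)`; integrating gives the lower bound. If `a₀ x` is the unique
positive maximizer, equality forces the margin at `a₀ x` to be `1`, that is `a₀ x ⊙ f x ≥ 1`.
The sign vector `a₀` itself attains the bound, so every minimizer attains it as well. -/

/-- `Tgen s z = max (s - z 1, ..., s - z K, 0)`, the function `T_s` from the paper. -/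
noncomputable def Tgen {K : ℕ} (s : ℝ) (z : Fin K → ℝ) : ℝ :=
  Finset.fold (· ⊔ ·) 0 (fun k => s - z k) Finset.univ

/-- The generalized ψ-loss: `ψ z = T₁ z - T₀ z`. -/
noncomputable def psiLoss {K : ℕ} (z : Fin K → ℝ) : ℝ :=
  Tgen 1 z - Tgen 0 z

open scoped Classical in
/-- The set of sign vectors `{-1, 1}^K`, as a finset of `Fin K → ℝ`. -/
noncomputable def signVecs (K : ℕ) : Finset (Fin K → ℝ) :=
  Finset.image (fun (b : Fin K → Bool) (k : Fin K) => if b k then (1 : ℝ) else -1)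
    Finset.univ

lemma mem_signVecs {K : ℕ} (a : Fin K → ℝ) :
    a ∈ signVecs K ↔ ∀ k, a k = 1 ∨ a k = -1 := by
  classical
  unfold signVecs
  constructor
  · intro h k
    rw [Finset.mem_image] at h
    obtain ⟨b, -, rfl⟩ := h
    by_cases hb : b k <;> simp [hb]
  · intro h
    rw [Finset.mem_image]
    refine ⟨fun k => decide (a k = 1), Finset.mem_univ _, ?_⟩
    funext k
    rcases h k with h1 | h1 <;> norm_num [h1]

lemma signVecs_nonempty (K : ℕ) : (signVecs K).Nonempty :=
  ⟨fun _ => 1, (mem_signVecs _).mpr fun _ => Or.inl rfl⟩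

open MeasureTheory

section Tgen

variable {K : ℕ} {s c : ℝ} {z : Fin K → ℝ}

lemma Tgen_le_iff : Tgen s z ≤ c ↔ 0 ≤ c ∧ ∀ k, s - z k ≤ c := by
  simp [Tgen, Finset.fold_max_le]

lemma Tgen_lt_iff : Tgen s z < c ↔ 0 < c ∧ ∀ k, s - z k < c := by
  simp [Tgen, Finset.fold_max_lt]

lemma Tgen_nonneg : 0 ≤ Tgen s z :=
  (Tgen_le_iff.1 le_rfl).1

lemma sub_le_Tgen (k : Fin K) : s - z k ≤ Tgen s z :=
  (Tgen_le_iff.1 le_rfl).2 k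

lemma Tgen_eq_max_zero_Tgen_add_one_sub_one (s : ℝ) (z : Fin K → ℝ) :
    Tgen s z = max 0 (Tgen (s + 1) z - 1) := by
  refine le_antisymm (Tgen_le_iff.2 ⟨le_max_left _ _, fun k => ?_⟩) (max_le Tgen_nonneg ?_)
  · exact le_max_of_le_right (by linarith [sub_le_Tgen (s := s + 1) (z := z) k])
  · refine sub_le_iff_le_add.2 (Tgen_le_iff.2 ⟨by linarith [Tgen_nonneg (s := s) (z := z)],
      fun k => ?_⟩)
    linarith [sub_le_Tgen (s := s) (z := z) k]

end Tgen

section psiLoss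

variable {K : ℕ} {z : Fin K → ℝ}

lemma psiLoss_eq_min_Tgen_one (z : Fin K → ℝ) : psiLoss z = min (Tgen 1 z) 1 := by
  have h := Tgen_eq_max_zero_Tgen_add_one_sub_one 0 z
  rw [zero_add] at h
  rw [psiLoss, h]
  rcases le_total (Tgen 1 z) 1 with h1 | h1 <;> simp [h1]

lemma psiLoss_nonneg (z : Fin K → ℝ) : 0 ≤ psiLoss z := by
  rw [psiLoss_eq_min_Tgen_one]
  exact le_min Tgen_nonneg zero_le_one

lemma psiLoss_le_one (z : Fin K → ℝ) : psiLoss z ≤ 1 := by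
  rw [psiLoss_eq_min_Tgen_one]
  exact min_le_right _ _

lemma psiLoss_eq_zero_iff : psiLoss z = 0 ↔ ∀ k, 1 ≤ z k := by
  rw [← (psiLoss_nonneg z).ge_iff_eq', psiLoss_eq_min_Tgen_one, min_le_iff, Tgen_le_iff]
  simp

lemma psiLoss_lt_one_iff : psiLoss z < 1 ↔ ∀ k, 0 < z k := by
  simp [psiLoss_eq_min_Tgen_one, Tgen_lt_iff]

end psiLoss

lemma eq_of_mem_signVecs_of_mul_pos {K : ℕ} {a b z : Fin K → ℝ} (ha : a ∈ signVecs K)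
    (hb : b ∈ signVecs K) (hza : ∀ k, 0 < a k * z k) (hzb : ∀ k, 0 < b k * z k) : a = b := by
  funext k
  have hak := hza k
  have hbk := hzb k
  rcases (mem_signVecs a).1 ha k with h | h <;> rcases (mem_signVecs b).1 hb k with h' | h' <;>
    rw [h] at hak ⊢ <;> rw [h'] at hbk ⊢ <;> linarith

lemma Real.sign_eq_of_one_le_mul {a t : ℝ} (ha : a = 1 ∨ a = -1) (h : 1 ≤ a * t) :
    Real.sign t = a := by
  rcases ha with rfl | rfl
  · exact Real.sign_of_pos (by linarith)
  · exact Real.sign_of_neg (by linarith)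

lemma mul_le_max_zero {w t : ℝ} (h0 : 0 ≤ t) (h1 : t ≤ 1) : w * t ≤ max 0 w := by
  rcases le_total 0 w with hw | hw
  · exact (mul_le_of_le_one_right hw h1).trans (le_max_right _ _)
  · exact (mul_nonpos_of_nonpos_of_nonneg hw h0).trans (le_max_left _ _)

lemma max_zero_sup'_le_sum_abs {ι : Type*} {S : Finset ι} (hS : S.Nonempty) (w : ι → ℝ) :
    max 0 (S.sup' hS w) ≤ ∑ a ∈ S, |w a| := by
  refine max_le (Finset.sum_nonneg fun a _ => abs_nonneg _) (Finset.sup'_le _ _ fun a ha => ?_)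
  exact (le_abs_self _).trans
    (Finset.single_le_sum (f := fun b => |w b|) (fun b _ => abs_nonneg _) ha)

section WeightedSum

variable {ι : Type*} {S : Finset ι} {w φ : ι → ℝ}

lemma sum_mul_eq_single_of_pos (hφ0 : ∀ a ∈ S, 0 ≤ φ a)
    (huniq : ∀ a ∈ S, ∀ b ∈ S, 0 < φ a → 0 < φ b → a = b) {a₁ : ι} (ha₁ : a₁ ∈ S)
    (hpos : 0 < φ a₁) :
    ∑ a ∈ S, w a * φ a = w a₁ * φ a₁ := by
  refine Finset.sum_eq_single_of_mem a₁ ha₁ fun b hb hne => ?_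
  rcases (hφ0 b hb).lt_or_eq with h | h
  · exact absurd (huniq b hb a₁ ha₁ h hpos) hne
  · rw [← h, mul_zero]

lemma sum_mul_eq_zero_of_forall_nonpos (hφ0 : ∀ a ∈ S, 0 ≤ φ a) (h : ∀ a ∈ S, φ a ≤ 0) :
    ∑ a ∈ S, w a * φ a = 0 :=
  Finset.sum_eq_zero fun a ha => by rw [le_antisymm (h a ha) (hφ0 a ha), mul_zero]

lemma sum_mul_le_max_zero_sup' (hS : S.Nonempty) (hφ0 : ∀ a ∈ S, 0 ≤ φ a)
    (hφ1 : ∀ a ∈ S, φ a ≤ 1) (huniq : ∀ a ∈ S, ∀ b ∈ S, 0 < φ a → 0 < φ b → a = b) :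
    ∑ a ∈ S, w a * φ a ≤ max 0 (S.sup' hS w) := by
  by_cases hex : ∃ a₁ ∈ S, 0 < φ a₁
  · obtain ⟨a₁, ha₁, hpos⟩ := hex
    rw [sum_mul_eq_single_of_pos hφ0 huniq ha₁ hpos]
    exact (mul_le_max_zero (hφ0 a₁ ha₁) (hφ1 a₁ ha₁)).trans
      (max_le_max le_rfl (Finset.le_sup' w ha₁))
  · push Not at hex
    rw [sum_mul_eq_zero_of_forall_nonpos hφ0 hex]
    exact le_max_left _ _

lemma sum_mul_eq_max_zero_sup'_iff (hS : S.Nonempty) (hφ0 : ∀ a ∈ S, 0 ≤ φ a)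
    (hφ1 : ∀ a ∈ S, φ a ≤ 1) (huniq : ∀ a ∈ S, ∀ b ∈ S, 0 < φ a → 0 < φ b → a = b)
    {a₀ : ι} (ha₀ : a₀ ∈ S) (hmax : ∀ a ∈ S, a ≠ a₀ → w a < w a₀) (hpos : 0 < w a₀) :
    ∑ a ∈ S, w a * φ a = max 0 (S.sup' hS w) ↔ φ a₀ = 1 := by
  have hsup : S.sup' hS w = w a₀ :=
    le_antisymm (Finset.sup'_le _ _ fun a ha => (eq_or_ne a a₀).elim (fun h => h ▸ le_rfl)
      fun h => (hmax a ha h).le) (Finset.le_sup' w ha₀)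
  rw [hsup, max_eq_right hpos.le]
  constructor
  · intro hsum
    by_cases hex : ∃ a₁ ∈ S, 0 < φ a₁
    · obtain ⟨a₁, ha₁, hφpos⟩ := hex
      rw [sum_mul_eq_single_of_pos hφ0 huniq ha₁ hφpos] at hsum
      obtain rfl : a₁ = a₀ := by
        by_contra hne
        have := mul_le_max_zero (w := w a₁) (hφ0 a₁ ha₁) (hφ1 a₁ ha₁)
        linarith [max_lt hpos (hmax a₁ ha₁ hne)]
      simpa [hpos.ne'] using hsum
    · push Not at hex
      rw [sum_mul_eq_zero_of_forall_nonpos hφ0 hex] at hsum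
      exact absurd hsum.symm hpos.ne'
  · intro h
    rw [sum_mul_eq_single_of_pos hφ0 huniq ha₀ (h ▸ one_pos), h, mul_one]

end WeightedSum

section PsiRisk

variable {K : ℕ}

noncomputable def psiRisk (w : (Fin K → ℝ) → ℝ) (z : Fin K → ℝ) : ℝ :=
  ∑ a ∈ signVecs K, w a * psiLoss (fun k => a k * z k)

noncomputable def bayesPsiRisk (w : (Fin K → ℝ) → ℝ) : ℝ :=
  ∑ a ∈ signVecs K, w a - max 0 ((signVecs K).sup' (signVecs_nonempty K) w)

lemma sum_mul_one_sub_psiLoss (w : (Fin K → ℝ) → ℝ) (z : Fin K → ℝ) :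
    ∑ a ∈ signVecs K, w a * (1 - psiLoss (fun k => a k * z k))
      = ∑ a ∈ signVecs K, w a - psiRisk w z := by
  simp only [psiRisk, mul_one_sub, Finset.sum_sub_distrib]

lemma eq_of_one_sub_psiLoss_pos (z : Fin K → ℝ) : ∀ a ∈ signVecs K, ∀ b ∈ signVecs K,
    0 < 1 - psiLoss (fun k => a k * z k) → 0 < 1 - psiLoss (fun k => b k * z k) → a = b :=
  fun _ ha _ hb hpa hpb => eq_of_mem_signVecs_of_mul_pos ha hb
    (psiLoss_lt_one_iff.1 (by linarith)) (psiLoss_lt_one_iff.1 (by linarith))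

lemma bayesPsiRisk_le_psiRisk (w : (Fin K → ℝ) → ℝ) (z : Fin K → ℝ) :
    bayesPsiRisk w ≤ psiRisk w z := by
  have h := sum_mul_le_max_zero_sup' (w := w) (signVecs_nonempty K)
    (fun a _ => sub_nonneg.2 (psiLoss_le_one (fun k => a k * z k)))
    (fun a _ => sub_le_self _ (psiLoss_nonneg (fun k => a k * z k)))
    (eq_of_one_sub_psiLoss_pos z)
  rw [sum_mul_one_sub_psiLoss] at h
  rw [bayesPsiRisk]
  linarith

lemma psiRisk_eq_bayesPsiRisk_iff {w : (Fin K → ℝ) → ℝ} (z : Fin K → ℝ) {a₀ : Fin K → ℝ}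
    (ha₀ : a₀ ∈ signVecs K) (hmax : ∀ a ∈ signVecs K, a ≠ a₀ → w a < w a₀)
    (hpos : 0 < w a₀) :
    psiRisk w z = bayesPsiRisk w ↔ ∀ k, 1 ≤ a₀ k * z k := by
  rw [← psiLoss_eq_zero_iff, ← sub_eq_self, ← sum_mul_eq_max_zero_sup'_iff (signVecs_nonempty K)
    (fun a _ => sub_nonneg.2 (psiLoss_le_one (fun k => a k * z k)))
    (fun a _ => sub_le_self _ (psiLoss_nonneg (fun k => a k * z k)))
    (eq_of_one_sub_psiLoss_pos z) ha₀ hmax hpos, sum_mul_one_sub_psiLoss, bayesPsiRisk]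
  constructor <;> intro h <;> linarith

end PsiRisk

theorem Finset.aemeasurable_sup' {ι α δ : Type*} [MeasurableSpace δ] [MeasurableSpace α]
    [SemilatticeSup α] [MeasurableSup₂ α] {μ : Measure δ} {s : Finset ι} (hs : s.Nonempty)
    {f : ι → δ → α} (hf : ∀ n ∈ s, AEMeasurable (f n) μ) : AEMeasurable (s.sup' hs f) μ :=
  Finset.sup'_induction (p := fun g => AEMeasurable g μ) hs f (fun _ hf _ hg => hf.sup hg) hf

lemma integrable_bayesPsiRisk {K : ℕ} {X : Type*} [MeasurableSpace X] {μ : Measure X}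
    {W : X → (Fin K → ℝ) → ℝ} (hW : ∀ a ∈ signVecs K, Integrable (fun x => W x a) μ) :
    Integrable (fun x => bayesPsiRisk (W x)) μ := by
  have hsup : AEMeasurable (fun x => (signVecs K).sup' (signVecs_nonempty K) (W x)) μ := by
    convert Finset.aemeasurable_sup' (signVecs_nonempty K) fun a ha => (hW a ha).aemeasurable
      using 1
    ext x
    rw [Finset.sup'_apply]
  refine (integrable_finsetSum _ hW).sub (Integrable.mono' (integrable_finsetSum _ fun a ha =>
    (hW a ha).abs) (aemeasurable_const.max hsup).aestronglyMeasurable (ae_of_all _ fun x => ?_))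
  rw [Real.norm_eq_abs, abs_of_nonneg (le_max_left _ _)]
  exact max_zero_sup'_le_sum_abs _ _

open MeasureTheory in
theorem stmt16_general (K : ℕ) {X : Type*} [MeasurableSpace X]
    (μ : Measure X) (W : X → (Fin K → ℝ) → ℝ)
    (hWint : ∀ a ∈ signVecs K, Integrable (fun x => W x a) μ)
    (f : X → Fin K → ℝ)
    (hint : Integrable
      (fun x => ∑ a ∈ signVecs K, W x a * psiLoss (fun k => a k * f x k)) μ) :
    -- the ψ-risk is bounded below by the Bayes ψ-risk
    (∫ x, ((∑ a ∈ signVecs K, W x a)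
          - max 0 ((signVecs K).sup' (signVecs_nonempty K) (fun a => W x a))) ∂μ)
      ≤ (∫ x, (∑ a ∈ signVecs K, W x a * psiLoss (fun k => a k * f x k)) ∂μ)
    ∧
    -- if a.e. the weight has a unique, strictly positive maximizer `a₀ x`, then …
    ∀ a₀ : X → Fin K → ℝ,
      (∀ᵐ x ∂μ, a₀ x ∈ signVecs K
          ∧ (∀ a ∈ signVecs K, a ≠ a₀ x → W x a < W x (a₀ x))
          ∧ 0 < W x (a₀ x)) →
      -- … equality holds iff a.e. `a₀ x k * f x k ≥ 1` for all `k` …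
      (((∫ x, (∑ a ∈ signVecs K, W x a * psiLoss (fun k => a k * f x k)) ∂μ)
          = (∫ x, ((∑ a ∈ signVecs K, W x a)
              - max 0 ((signVecs K).sup' (signVecs_nonempty K) (fun a => W x a))) ∂μ))
        ↔ (∀ᵐ x ∂μ, ∀ k, 1 ≤ a₀ x k * f x k))
      ∧
      -- … and any minimizer `f` of the ψ-risk satisfies `sign (f x) = a₀ x` a.e.
      (Measurable a₀ →
        (∀ g : X → Fin K → ℝ, Measurable g →
          Integrable
            (fun x => ∑ a ∈ signVecs K, W x a * psiLoss (fun k => a k * g x k)) μ →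
          (∫ x, (∑ a ∈ signVecs K, W x a * psiLoss (fun k => a k * f x k)) ∂μ)
            ≤ ∫ x, (∑ a ∈ signVecs K, W x a * psiLoss (fun k => a k * g x k)) ∂μ) →
        ∀ᵐ x ∂μ, ∀ k, Real.sign (f x k) = a₀ x k) := by
  have hbayes := integrable_bayesPsiRisk hWint
  have hlower : ∫ x, bayesPsiRisk (W x) ∂μ ≤ ∫ x, psiRisk (W x) (f x) ∂μ :=
    integral_mono hbayes hint fun x => bayesPsiRisk_le_psiRisk (W x) (f x)
  refine ⟨hlower, fun a₀ ha₀ => ?_⟩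
  have hiff : ∀ g : X → Fin K → ℝ, Integrable (fun x => psiRisk (W x) (g x)) μ →
      ((∫ x, psiRisk (W x) (g x) ∂μ) = ∫ x, bayesPsiRisk (W x) ∂μ ↔
        ∀ᵐ x ∂μ, ∀ k, 1 ≤ a₀ x k * g x k) := by
    intro g hg
    rw [eq_comm, integral_eq_iff_of_ae_le hbayes hg
      (ae_of_all _ fun x => bayesPsiRisk_le_psiRisk (W x) (g x))]
    refine ⟨fun h => ?_, fun h => ?_⟩ <;> filter_upwards [h, ha₀] with x hx ⟨hmem, hmax, hpos⟩
    exacts [(psiRisk_eq_bayesPsiRisk_iff _ hmem hmax hpos).1 hx.symm,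
      ((psiRisk_eq_bayesPsiRisk_iff _ hmem hmax hpos).2 hx).symm]
  refine ⟨hiff f hint, fun ha₀meas hmin => ?_⟩
  have hbayes_a₀ : (fun x => psiRisk (W x) (a₀ x)) =ᵐ[μ] fun x => bayesPsiRisk (W x) := by
    filter_upwards [ha₀] with x ⟨hmem, hmax, hpos⟩
    refine (psiRisk_eq_bayesPsiRisk_iff _ hmem hmax hpos).2 fun k => ?_
    rcases (mem_signVecs _).1 hmem k with h | h <;> simp [h]
  have hupper : ∫ x, psiRisk (W x) (f x) ∂μ ≤ ∫ x, psiRisk (W x) (a₀ x) ∂μ :=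
    hmin a₀ ha₀meas (hbayes.congr hbayes_a₀.symm)
  rw [integral_congr_ae hbayes_a₀] at hupper
  filter_upwards [(hiff f hint).1 (le_antisymm hupper hlower), ha₀] with x hx ⟨hmem, _⟩ k
  exact Real.sign_eq_of_one_le_mul ((mem_signVecs _).1 hmem k) (hx k)

open MeasureTheory in
theorem stmt16 (K : ℕ) (hK : 1 ≤ K) {X : Type*} [MeasurableSpace X]
    (μ : Measure X) (W : X → (Fin K → ℝ) → ℝ)
    (hWmeas : ∀ a ∈ signVecs K, Measurable fun x => W x a)
    (hWint : ∀ a ∈ signVecs K, Integrable (fun x => W x a) μ)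
    (f : X → Fin K → ℝ) (hf : Measurable f)
    (hint : Integrable
      (fun x => ∑ a ∈ signVecs K, W x a * psiLoss (fun k => a k * f x k)) μ) :
    -- the ψ-risk is bounded below by the Bayes ψ-risk
    (∫ x, ((∑ a ∈ signVecs K, W x a)
          - max 0 ((signVecs K).sup' (signVecs_nonempty K) (fun a => W x a))) ∂μ)
      ≤ (∫ x, (∑ a ∈ signVecs K, W x a * psiLoss (fun k => a k * f x k)) ∂μ)
    ∧
    -- if a.e. the weight has a unique, strictly positive maximizer `a₀ x`, then …
    ∀ a₀ : X → Fin K → ℝ,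
      (∀ᵐ x ∂μ, a₀ x ∈ signVecs K
          ∧ (∀ a ∈ signVecs K, a ≠ a₀ x → W x a < W x (a₀ x))
          ∧ 0 < W x (a₀ x)) →
      -- … equality holds iff a.e. `a₀ x k * f x k ≥ 1` for all `k` …
      (((∫ x, (∑ a ∈ signVecs K, W x a * psiLoss (fun k => a k * f x k)) ∂μ)
          = (∫ x, ((∑ a ∈ signVecs K, W x a)
              - max 0 ((signVecs K).sup' (signVecs_nonempty K) (fun a => W x a))) ∂μ))
        ↔ (∀ᵐ x ∂μ, ∀ k, 1 ≤ a₀ x k * f x k))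
      ∧
      -- … and any minimizer `f` of the ψ-risk satisfies `sign (f x) = a₀ x` a.e.
      (Measurable a₀ →
        (∀ g : X → Fin K → ℝ, Measurable g →
          Integrable
            (fun x => ∑ a ∈ signVecs K, W x a * psiLoss (fun k => a k * g x k)) μ →
          (∫ x, (∑ a ∈ signVecs K, W x a * psiLoss (fun k => a k * f x k)) ∂μ)
            ≤ ∫ x, (∑ a ∈ signVecs K, W x a * psiLoss (fun k => a k * g x k)) ∂μ) →
        ∀ᵐ x ∂μ, ∀ k, Real.sign (f x k) = a₀ x k) :=
  stmt16_general K μ W hWint f hint
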